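/- If A is an alphabet with exactly 2 letters, then for every word u over A, h(u) = ρ(u) + 1. -/

import Mathlib

variable {A : Type*}

/-- Simon's congruence of order `k`: `u` and `v` have the same subwords of length ≤ k. -/
def SimonCong (k : ℕ) (u v : List A) : Prop :=
  ∀ s : List A, s.length ≤ k → (s.Sublist u ↔ s.Sublist v)

/-- Subword distance `δ(u,v) = sup {k | u ∼ₖ v} ∈ ℕ∞`. -/
noncomputable def sdelta (u v : List A) : ℕ∞ :=
  sSup {d : ℕ∞ | ∃ k : ℕ, d = k ∧ SimonCong k u v}

/-- Right side distance `r(u,t) = δ(u, u·t)`. -/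
noncomputable def rdist (u t : List A) : ℕ∞ := sdelta u (u ++ t)

/-- Left side distance `ℓ(t,u) = δ(t·u, u)`. -/
noncomputable def ldist (t u : List A) : ℕ∞ := sdelta (t ++ u) u

/-- Piecewise complexity `h(u)`: least `n` such that any `v` with `u ∼ₙ v` equals `u`. -/
noncomputable def pcHeight (u : List A) : ℕ :=
  sInf {n : ℕ | ∀ v : List A, SimonCong n u v → v = u}

/-- `u` is `m`-reduced: no strict subword of `u` is `∼ₘ`-equivalent to `u`. -/
def Reduced (m : ℕ) (u : List A) : Prop :=
  ∀ u' : List A, u'.Sublist u → u' ≠ u → ¬ SimonCong m u u'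

/-- Piecewise minimality index `ρ(u)`: least `m` such that `u` is `m`-reduced. -/
noncomputable def pcRho (u : List A) : ℕ := sInf {m : ℕ | Reduced m u}

/-- An `A`-arch: contains every letter of `A` but no strict prefix does. -/
def IsArch (A : Type*) [Fintype A] (s : List A) : Prop :=
  (∀ a : A, a ∈ s) ∧ ∀ t : List A, t <+: s → t ≠ s → ∃ a : A, a ∉ t

/-- The infinite periodic word `u^ω`. -/
def omegaWord (u : List A) (hu : u ≠ []) (i : ℕ) : A :=
  u.get ⟨i % u.length, Nat.mod_lt i (List.length_pos_of_ne_nil hu)⟩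

/-- The arch-jumping function `α` on `u^ω`: `α(i)` is the least `j > i` such that
every letter of `A` occurs among positions `i, …, j-1` of `u^ω`. -/
noncomputable def archJump (u : List A) (hu : u ≠ []) (i : ℕ) : ℕ :=
  sInf {j : ℕ | i < j ∧ ∀ a : A, ∃ m : ℕ, i ≤ m ∧ m < j ∧ omegaWord u hu m = a}

/-- `p` is an arch-period of `u` starting at `i`. -/
def IsArchPeriodAt (u : List A) (hu : u ≠ []) (i p : ℕ) : Prop :=
  0 < p ∧ ∃ k : ℕ, (archJump u hu)^[k + p] i ≡ (archJump u hu)^[k] i [MOD u.length]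

/-- The arch-period of `u`: the least arch-period starting at 0. -/
noncomputable def archPeriod (u : List A) (hu : u ≠ []) : ℕ :=
  sInf {p : ℕ | IsArchPeriodAt u hu 0 p}

/-- `K_u`: the least `k` with `α^{k+p}(0) ≡ α^k(0) (mod L)`. -/
noncomputable def archTransientIndex (u : List A) (hu : u ≠ []) : ℕ :=
  sInf {k : ℕ |
    (archJump u hu)^[k + archPeriod u hu] 0 ≡ (archJump u hu)^[k] 0 [MOD u.length]}

/-- The transient `T_u = α^{K_u}(0)`. -/
noncomputable def archTransient (u : List A) (hu : u ≠ []) : ℕ :=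
  (archJump u hu)^[archTransientIndex u hu] 0

/-- The span `Δ_u = α^{K_u+p_u}(0) − α^{K_u}(0)`. -/
noncomputable def archSpan (u : List A) (hu : u ≠ []) : ℕ :=
  (archJump u hu)^[archTransientIndex u hu + archPeriod u hu] 0 - archTransient u hu

/-- `u^n`: the `n`-fold concatenation of `u`. -/
def listPow (u : List A) (n : ℕ) : List A := (List.replicate n u).flatten

/-!
Call `u = x ++ c :: y` a deletion at level `k` if `u ∼ₖ x ++ y`, and `u = x ++ y` an insertion
at level `k` if `u ∼ₖ x ++ c :: y`. A letter can be deleted at level `k` exactly when it can be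
doubled at level `k + 1`; so if `u` is not `m`-reduced, doubling a deletable letter gives a word
`v ≠ u` with `u ∼ₘ₊₁ v`, whence `h(u) ≥ ρ(u) + 1`.

Conversely, over two letters, `u ∼ₖ v` with `u ≠ v` yields an insertion into `u` at level `k`.
If the first letters differ, the first letter of `v` can be put in front of `u`. Otherwise let `f`
be the other letter; cutting both words after their first `f` lowers the level by one, and since
the cut-off prefix contains both letters an insertion into the rests lifts back to `u`; if the
rests agree, `u` and `v` differ only in the length of their leading block. An insertion at level
`k + 1` next to an equal letter is a doubling, hence a deletion at level `k`; otherwise both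
neighbours of the inserted letter are the other letter, and one of them is deletable at level
`k`. Thus a `ρ(u)`-reduced word is determined by its subwords of length at most `ρ(u) + 1`.
-/

open scoped List

namespace List

variable {a : A} {s t l l' l₀ l₁ l₂ : List A}

theorem exists_eq_append_cons_notMem (h : a ∈ l) : ∃ s t, l = s ++ a :: t ∧ a ∉ s := by
  induction l with
  | nil => cases h
  | cons b l ih =>
    by_cases hab : a = b
    · exact ⟨[], l, by simp [hab], by simp⟩
    · obtain ⟨s, t, rfl, hs⟩ := ih ((mem_cons.mp h).resolve_left hab)
      exact ⟨b :: s, t, by simp, by simp [hs, hab]⟩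

theorem Sublist.of_cons_sublist_append_cons (h : a :: s <+ l₀ ++ a :: l₁) (ha : a ∉ l₀) :
    s <+ l₁ := by
  induction l₀ with
  | nil => exact cons_sublist_cons.mp h
  | cons b l₀ ih =>
    obtain ⟨hab, ha⟩ := ne_and_not_mem_of_not_mem_cons ha
    exact ih (h.of_cons_of_ne hab) ha

theorem append_singleton_sublist_or_cons_sublist (h : s ++ a :: t <+ l₁ ++ l₂) :
    s ++ [a] <+ l₁ ∨ a :: t <+ l₂ := by
  obtain ⟨t₁, t₂, heq, h₁, h₂⟩ := sublist_append_iff.mp h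
  rcases append_eq_append_iff.mp heq with ⟨m, rfl, hm⟩ | ⟨m, rfl, hm⟩
  · cases m with
    | nil => exact .inr (by rwa [hm])
    | cons b m =>
      obtain ⟨rfl, -⟩ := cons_eq_cons.mp hm
      exact .inl ((by simp : s ++ [a] <+ s ++ a :: m).trans h₁)
  · exact .inr ((hm ▸ sublist_append_right m _).trans h₂)

theorem exists_sublist_append_of_sublist_of_ne (h : l' <+ l) (hne : l' ≠ l) :
    ∃ x c y, l = x ++ c :: y ∧ l' <+ x ++ y := by
  induction h with
  | slnil => exact absurd rfl hne
  | @cons l₁ l₂ a h _ => exact ⟨[], a, l₂, rfl, h⟩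
  | @cons_cons l₁ l₂ a _ ih =>
    obtain ⟨x, c, y, rfl, hsub⟩ := ih (fun h => hne (h ▸ rfl))
    exact ⟨a :: x, c, y, rfl, hsub.cons_cons a⟩

end List

theorem simonCong_zero (u v : List A) : SimonCong 0 u v := by
  intro s hs
  rw [List.eq_nil_of_length_eq_zero (Nat.le_zero.mp hs)]
  simp

namespace SimonCong

variable {k : ℕ} {a : A} {u v w : List A}

theorem symm (h : SimonCong k u v) : SimonCong k v u := fun s hs => (h s hs).symm

theorem trans (h₁ : SimonCong k u v) (h₂ : SimonCong k v w) : SimonCong k u w :=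
  fun s hs => (h₁ s hs).trans (h₂ s hs)

theorem mono {k' : ℕ} (hk : k' ≤ k) (h : SimonCong k u v) : SimonCong k' u v :=
  fun s hs => h s (hs.trans hk)

theorem of_sublist_of_sublist (h : SimonCong k u v) (h₁ : u <+ w) (h₂ : w <+ v) :
    SimonCong k u w :=
  fun s hs => ⟨fun hsu => hsu.trans h₁, fun hsw => (h s hs).mpr (hsw.trans h₂)⟩

theorem of_sublist_of_sublist' (h : SimonCong k u v) (h₁ : v <+ w) (h₂ : w <+ u) :
    SimonCong k u w :=
  h.trans (h.symm.of_sublist_of_sublist h₁ h₂)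

theorem mem_iff (h : SimonCong (k + 1) u v) (a : A) : a ∈ u ↔ a ∈ v := by
  simpa only [List.singleton_sublist] using h [a] (by simp)

theorem append_left (hw : ∀ a, a ∈ w) (h : SimonCong k u v) :
    SimonCong (k + 1) (w ++ u) (w ++ v) := by
  have key : ∀ {u v : List A}, SimonCong k u v → ∀ s : List A, s.length ≤ k + 1 →
      s <+ w ++ u → s <+ w ++ v := by
    intro u v h s hs hsub
    obtain ⟨s₁, s₂, rfl, h₁, h₂⟩ := List.sublist_append_iff.mp hsub
    rcases s₁, s₂ with ⟨_ | ⟨b, s₁⟩, _ | ⟨c, s₂⟩⟩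
    · simp
    · have hs₂ : s₂.length ≤ k := by simpa using hs
      have := (h s₂ hs₂).mp ((List.sublist_cons_self c s₂).trans h₂)
      simpa using (List.singleton_sublist.mpr (hw c)).append this
    · exact h₁.append (List.nil_sublist _)
    · have hs₂ : (c :: s₂).length ≤ k := by simp at hs ⊢; omega
      exact h₁.append ((h _ hs₂).mp h₂)
  exact fun s hs => ⟨key h s hs, key h.symm s hs⟩

theorem of_append_cons {u₀ u₁ v₀ v₁ : List A}
    (h : SimonCong (k + 1) (u₀ ++ a :: u₁) (v₀ ++ a :: v₁)) (hu : a ∉ u₀)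
    (hv : a ∉ v₀) : SimonCong k u₁ v₁ := by
  have key : ∀ {u₀ u₁ v₀ v₁ : List A},
      SimonCong (k + 1) (u₀ ++ a :: u₁) (v₀ ++ a :: v₁) → a ∉ v₀ →
      ∀ s : List A, s.length ≤ k → s <+ u₁ → s <+ v₁ := by
    intro u₀ u₁ v₀ v₁ h hv s hs hsub
    have hsub' : a :: s <+ u₀ ++ a :: u₁ :=
      (hsub.cons_cons a).trans (List.sublist_append_right _ _)
    exact ((h _ (by simpa using hs)).mp hsub').of_cons_sublist_append_cons hv
  exact fun s hs => ⟨key h hv s hs, key h.symm hu s hs⟩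

theorem cons_cons_of_ne {b : A} (h : SimonCong k (a :: u) (b :: v)) (hab : a ≠ b) :
    SimonCong k (b :: a :: u) (a :: u) := by
  rcases k with _ | n
  · exact simonCong_zero _ _
  refine fun s hs => ⟨fun hsub => ?_, fun hsub => hsub.cons b⟩
  rcases List.sublist_cons_iff.mp hsub with hsub | ⟨s₂, rfl, hs₂⟩
  · exact hsub
  refine (h _ hs).mpr ?_
  have hs₂len : s₂.length ≤ n + 1 := by simp at hs; omega
  rcases List.sublist_cons_iff.mp ((h s₂ hs₂len).mp hs₂) with hs₂v | ⟨s₃, rfl, hs₃⟩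
  · exact hs₂v.cons_cons b
  -- `s = b :: b :: s₃` embeds in `b :: v` since `b :: s₃` lies in `v` after its first `a`.
  have hbu : b :: s₃ <+ u := hs₂.of_cons_of_ne hab.symm
  have hav : a ∈ v := (List.mem_cons.mp ((h.mem_iff a).mp List.mem_cons_self)).resolve_left hab
  obtain ⟨w₀, w₁, rfl, hw₀⟩ := List.exists_eq_append_cons_notMem hav
  have hcut : SimonCong n u w₁ :=
    of_append_cons (u₀ := []) (v₀ := b :: w₀) h (by simp) (by simp [hab, hw₀])
  have hbw : b :: s₃ <+ w₁ := (hcut _ (by simp at hs ⊢; omega)).mp hbu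
  exact ((hbw.cons a).trans (List.sublist_append_right w₀ _)).cons_cons b

end SimonCong

theorem simonCong_succ_dup_iff {k : ℕ} {x y : List A} {c : A} :
    SimonCong (k + 1) (x ++ c :: y) (x ++ c :: c :: y) ↔ SimonCong k (x ++ c :: y) (x ++ y) := by
  constructor
  · refine fun h s hs => ⟨fun hsub => ?_, fun hsub => hsub.middle c⟩
    obtain ⟨s₁, s₂, rfl, h₁, h₂⟩ := List.sublist_append_iff.mp hsub
    rcases List.sublist_cons_iff.mp h₂ with h₂ | ⟨s₃, rfl, h₃⟩
    · exact h₁.append h₂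
    have hdup : s₁ ++ c :: c :: s₃ <+ x ++ c :: y :=
      (h _ (by simp at hs ⊢; omega)).mpr (h₁.append ((h₃.cons_cons c).cons_cons c))
    rcases List.append_singleton_sublist_or_cons_sublist hdup with hx | hy
    · simpa using hx.append h₃
    · exact h₁.append (List.cons_sublist_cons.mp hy)
  · have hcy : x ++ c :: y <+ x ++ c :: c :: y :=
      ((List.sublist_cons_self c y).cons_cons c).append_left x
    refine fun h s hs => ⟨fun hsub => hsub.trans hcy, fun hsub => ?_⟩
    obtain ⟨s₁, s₂, rfl, h₁, h₂⟩ := List.sublist_append_iff.mp hsub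
    rcases List.sublist_cons_iff.mp h₂ with h₂ | ⟨s₃, rfl, h₃⟩
    · exact h₁.append h₂
    rcases List.sublist_cons_iff.mp h₃ with h₃ | ⟨s₄, rfl, h₄⟩
    · exact h₁.append (h₃.cons_cons c)
    have hdel : s₁ ++ c :: s₄ <+ x ++ y :=
      (h _ (by simp at hs ⊢; omega)).mp (h₁.append (h₄.cons_cons c))
    rcases List.append_singleton_sublist_or_cons_sublist hdel with hx | hy
    · simpa using hx.append (h₄.cons_cons c)
    · exact h₁.append (hy.cons_cons c)

theorem SimonCong.cons_of_replicate_append {k p q : ℕ} {a : A} {w : List A}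
    (h : SimonCong k (List.replicate p a ++ w) (List.replicate q a ++ w)) (hpq : p ≠ q) :
    SimonCong k (List.replicate p a ++ w) (a :: (List.replicate p a ++ w)) := by
  rcases hpq.lt_or_gt with hlt | hgt
  · refine h.of_sublist_of_sublist (List.sublist_cons_self a _) ?_
    rw [← List.cons_append, ← List.replicate_succ]
    exact ((List.replicate_sublist_replicate a).mpr hlt).append_right w
  · obtain ⟨p, rfl⟩ := Nat.exists_eq_add_of_lt hgt
    have hrep : ∀ n v, List.replicate (n + 1) a ++ v = List.replicate n a ++ a :: v := by
      intro n v
      rw [List.replicate_succ', List.append_assoc, List.singleton_append]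
    have hdel :
        SimonCong k (List.replicate (q + p) a ++ a :: w) (List.replicate (q + p) a ++ w) := by
      rw [← hrep]
      refine h.of_sublist_of_sublist' ?_ ?_
      · exact ((List.replicate_sublist_replicate a).mpr (by omega)).append_right w
      · exact ((List.replicate_sublist_replicate a).mpr (by omega)).append_right w
    rw [← List.cons_append, ← List.replicate_succ, hrep, hrep, hrep]
    exact (simonCong_succ_dup_iff.mpr hdel).mono k.le_succ

theorem SimonCong.of_insert_after_ne {k : ℕ} {x y : List A} {c e : A} (hce : c ≠ e)
    (hy : ∀ d ∈ y.head?, d = e) (h : SimonCong (k + 1) (x ++ e :: y) (x ++ e :: c :: y)) :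
    SimonCong k (x ++ e :: y) (x ++ y) := by
  refine fun s hs => ⟨fun hsub => ?_, fun hsub => hsub.middle e⟩
  obtain ⟨s₁, s₂, rfl, h₁, h₂⟩ := List.sublist_append_iff.mp hsub
  rcases List.sublist_cons_iff.mp h₂ with h₂ | ⟨s₃, rfl, h₃⟩
  · exact h₁.append h₂
  have hins : s₁ ++ e :: c :: s₃ <+ x ++ e :: y :=
    (h _ (by simp at hs ⊢; omega)).mpr (h₁.append ((h₃.cons_cons c).cons_cons e))
  rcases List.append_singleton_sublist_or_cons_sublist hins with hx | hy'
  · simpa using hx.append h₃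
  · rcases y with _ | ⟨d, y⟩
    · simp at hy'
    obtain rfl : d = e := hy d rfl
    have hcy : c :: s₃ <+ y := (List.cons_sublist_cons.mp hy').of_cons_of_ne hce
    exact h₁.append (((List.sublist_cons_self c s₃).trans hcy).cons_cons d)

theorem SimonCong.of_insert_cons_ne {k : ℕ} {y : List A} {c f : A} (hcf : c ≠ f)
    (h : SimonCong (k + 1) (f :: y) (c :: f :: y)) : SimonCong k (f :: y) y := by
  refine fun s hs => ⟨fun hsub => ?_, fun hsub => hsub.cons f⟩
  rcases List.sublist_cons_iff.mp hsub with hsub | ⟨s₃, rfl, h₃⟩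
  · exact hsub
  have hins : c :: f :: s₃ <+ f :: y :=
    (h _ (by simp at hs ⊢; omega)).mpr ((h₃.cons_cons f).cons_cons c)
  exact (List.sublist_cons_self c _).trans (hins.of_cons_of_ne hcf)

section Binary

variable [Fintype A]

theorem eq_or_eq_of_card_eq_two (hA : Fintype.card A = 2) {a b : A} (hab : a ≠ b) (c : A) :
    c = a ∨ c = b := by
  obtain ⟨y, -, hy⟩ := (Nat.card_eq_two_iff' a).mp (by rwa [Nat.card_eq_fintype_card])
  by_cases hca : c = a
  · exact .inl hca
  · exact .inr ((hy c hca).trans (hy b hab.symm).symm)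

theorem SimonCong.exists_deletion_of_insertion (hA : Fintype.card A = 2) {k : ℕ} {x y : List A}
    {c : A} (h : SimonCong (k + 1) (x ++ y) (x ++ c :: y)) :
    ∃ x' c' y', x ++ y = x' ++ c' :: y' ∧ SimonCong k (x ++ y) (x' ++ y') := by
  by_cases hyc : ∃ y', y = c :: y'
  · obtain ⟨y', rfl⟩ := hyc
    exact ⟨x, c, y', rfl, simonCong_succ_dup_iff.mp h⟩
  push Not at hyc
  rcases x.eq_nil_or_concat with rfl | ⟨x', e, rfl⟩
  · rcases y with _ | ⟨f, y⟩
    · simpa using (h.mem_iff c).mpr (by simp)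
    have hcf : c ≠ f := fun hcf => hyc y (hcf ▸ rfl)
    exact ⟨[], f, y, rfl, h.of_insert_cons_ne hcf⟩
  simp only [List.concat_eq_append, List.append_assoc, List.singleton_append] at h ⊢
  by_cases hec : e = c
  · subst hec
    exact ⟨x', e, y, rfl, simonCong_succ_dup_iff.mp h⟩
  have hy : ∀ d ∈ y.head?, d = e := by
    intro d hd
    obtain ⟨y', rfl⟩ : ∃ y', y = d :: y' := by
      cases y <;> simp_all
    exact (eq_or_eq_of_card_eq_two hA hec d).resolve_right fun hdc => hyc y' (hdc ▸ rfl)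
  exact ⟨x', e, y, rfl, h.of_insert_after_ne (Ne.symm hec) hy⟩

theorem SimonCong.exists_insertion_of_cons_cons (hA : Fintype.card A = 2) {k : ℕ} {a : A}
    {u v : List A} (ih : ∀ {u v : List A}, SimonCong k u v → u ≠ v →
      ∃ x c y, u = x ++ y ∧ SimonCong k u (x ++ c :: y))
    (h : SimonCong (k + 1) (a :: u) (a :: v)) (hne : a :: u ≠ a :: v) :
    ∃ x c y, a :: u = x ++ y ∧ SimonCong (k + 1) (a :: u) (x ++ c :: y) := by
  obtain ⟨f, hfa⟩ := Fintype.exists_ne_of_one_lt_card (by omega) a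
  have hletter : ∀ {l : List A}, f ∉ l → l = List.replicate l.length a := fun hl =>
    List.eq_replicate_of_mem fun d hd =>
      (eq_or_eq_of_card_eq_two hA hfa d).resolve_left (ne_of_mem_of_not_mem hd hl)
  by_cases hf : f ∈ a :: u
  · obtain ⟨P, U, hPU, hP⟩ := List.exists_eq_append_cons_notMem hf
    obtain ⟨Q, V, hQV, hQ⟩ := List.exists_eq_append_cons_notMem ((h.mem_iff f).mp hf)
    rw [hPU] at h hne ⊢
    rw [hQV] at h hne
    by_cases hUV : U = V
    · subst hUV
      rw [hletter hP, hletter hQ] at h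
      rw [hletter hP]
      have hPQ : P.length ≠ Q.length := fun hl => hne (by rw [hletter hP, hletter hQ, hl])
      exact ⟨[], a, _, rfl, h.cons_of_replicate_append hPQ⟩
    · obtain ⟨x, c, y, rfl, hins⟩ := ih (h.of_append_cons hP hQ) hUV
      have haP : a ∈ P := by
        rcases P with _ | ⟨b, P⟩
        · exact absurd (List.cons_eq_cons.mp hPU).1 hfa.symm
        · exact List.mem_cons.mpr (.inl (List.cons_eq_cons.mp hPU).1)
      have hall : ∀ d, d ∈ P ++ [f] := fun d => by
        rcases eq_or_eq_of_card_eq_two hA hfa d with rfl | rfl <;> simp [haP]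
      exact ⟨P ++ f :: x, c, y, by simp, by simpa using hins.append_left hall⟩
  · have hfv : f ∉ a :: v := fun hfv => hf ((h.mem_iff f).mpr hfv)
    have hlen : (a :: u).length ≠ (a :: v).length :=
      fun hl => hne (by rw [hletter hf, hletter hfv, hl])
    rw [← List.append_nil (a :: u), ← List.append_nil (a :: v), hletter hf, hletter hfv] at h
    have hins := h.cons_of_replicate_append hlen
    rw [List.append_nil, ← hletter hf] at hins
    exact ⟨[], a, a :: u, rfl, hins⟩

theorem SimonCong.exists_insertion_of_ne (hA : Fintype.card A = 2) {k : ℕ} {u v : List A}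
    (h : SimonCong k u v) (hne : u ≠ v) :
    ∃ x c y, u = x ++ y ∧ SimonCong k u (x ++ c :: y) := by
  induction k generalizing u v with
  | zero =>
    obtain ⟨a⟩ : Nonempty A := Fintype.card_pos_iff.mp (by omega)
    exact ⟨u, a, [], by simp, simonCong_zero _ _⟩
  | succ k ih =>
    rcases u with _ | ⟨a, u⟩ <;> rcases v with _ | ⟨b, v⟩
    · exact absurd rfl hne
    · simpa using (h.mem_iff b).mpr (by simp)
    · simpa using (h.mem_iff a).mp (by simp)
    by_cases hab : a = b
    · subst hab
      exact h.exists_insertion_of_cons_cons hA ih hne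
    · exact ⟨[], b, a :: u, rfl, (h.cons_cons_of_ne hab).symm⟩

end Binary

theorem reduced_iff {m : ℕ} {u : List A} :
    Reduced m u ↔ ∀ x c y, u = x ++ c :: y → ¬ SimonCong m u (x ++ y) := by
  constructor
  · rintro hred x c y rfl
    refine hred _ ((List.sublist_cons_self c y).append_left x) fun h => ?_
    simpa using congrArg List.length h
  · intro hdel u' hsub hne hsim
    obtain ⟨x, c, y, rfl, hsub'⟩ := List.exists_sublist_append_of_sublist_of_ne hsub hne
    exact hdel x c y rfl
      (hsim.of_sublist_of_sublist' hsub' ((List.sublist_cons_self c y).append_left x))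

theorem reduced_length (u : List A) : Reduced u.length u := fun _ hsub hne hsim =>
  hne (hsub.antisymm ((hsim u le_rfl).mp (List.Sublist.refl u)))

theorem reduced_pcRho (u : List A) : Reduced (pcRho u) u :=
  Nat.sInf_mem (s := {m | Reduced m u}) ⟨_, reduced_length u⟩

theorem exists_ne_simonCong_pcRho [Nonempty A] (u : List A) :
    ∃ v ≠ u, SimonCong (pcRho u) u v := by
  rcases hρ : pcRho u with _ | m
  · exact ⟨Classical.arbitrary A :: u, List.cons_ne_self _ _, simonCong_zero _ _⟩
  have hm : ¬ Reduced m u :=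
    Nat.notMem_of_lt_sInf (s := {m | Reduced m u}) (by unfold pcRho at hρ; omega)
  simp only [reduced_iff, not_forall, not_not] at hm
  obtain ⟨x, c, y, rfl, hdel⟩ := hm
  exact ⟨x ++ c :: c :: y, by simp, simonCong_succ_dup_iff.mpr hdel⟩

theorem eq_of_simonCong_succ_of_reduced [Fintype A] (hA : Fintype.card A = 2) {m : ℕ}
    {u v : List A} (hred : Reduced m u) (h : SimonCong (m + 1) u v) : v = u := by
  by_contra hne
  obtain ⟨x, c, y, rfl, hins⟩ := h.exists_insertion_of_ne hA (Ne.symm hne)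
  obtain ⟨x', c', y', heq, hdel⟩ := hins.exists_deletion_of_insertion hA
  exact reduced_iff.mp hred x' c' y' heq hdel

/-- over a two-letter alphabet, `h(u) = ρ(u) + 1`. -/
theorem stmt3 {A : Type*} [Fintype A] (hA : Fintype.card A = 2) (u : List A) :
    pcHeight u = pcRho u + 1 := by
  have : Nonempty A := Fintype.card_pos_iff.mp (by omega)
  refine IsLeast.csInf_eq
    ⟨fun v h => eq_of_simonCong_succ_of_reduced hA (reduced_pcRho u) h, ?_⟩
  intro n hn
  by_contra! hlt
  obtain ⟨v, hne, hv⟩ := exists_ne_simonCong_pcRho u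
  exact hne (hn v (hv.mono (by omega)))
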